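/- Assume that, as T → ∞: (i) ∫_{G̊₃(π/2) ∪ G̊₄(π/2)} (∑_{n ∈ ℕ, 2 ≤ n ≤ ξ} n^{−1/2} cos(φ₁(t)·log n)) · Z(φ₁(t))² · Z̃²(t) dt ∼ (2ε/5 − ε²/50)·U·(log P)²; (ii) G̊₃(π/2) ∪ G̊₄(π/2) is an interval on which t ↦ ∑_{n ∈ ℕ, 2 ≤ n ≤ ξ} n^{−1/2} cos(φ₁(t)·log n) and t ↦ Z(φ₁(t))² are continuous; (iii) the Lebesgue measure of G₃(π/2) ∪ G₄(π/2) is asymptotically U. Then for every sufficiently large T there exist α₃ = α₃(T), α₄ = α₄(T) ∈ G̊₃(π/2) ∪ G̊₄(π/2) such that, as T → ∞, ∑_{n ∈ ℕ, 2 ≤ n ≤ ξ} n^{−1/2} cos(φ₁(α₃)·log n) ∼ (2ε/5 − ε²/50)·(log P)² / |ζ(1/2 + i·φ₁(α₄))|². -/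

import Mathlib

open Real Filter MeasureTheory Finset Asymptotics

noncomputable section

/-- `Z(t)^2 = |zeta(1/2 + i t)|^2`, the square of the Hardy function. -/
def Zsq (t : ℝ) : ℝ := ‖riemannZeta (1/2 + t * Complex.I)‖ ^ 2

/-- `U = T^(1/2 + eps)`. -/
def UU (ε T : ℝ) : ℝ := T ^ ((1:ℝ)/2 + ε)

/-- `xi = (T/(2 pi))^(eps/10)`. -/
def XI (ε T : ℝ) : ℝ := (T / (2 * π)) ^ (ε / 10)

/-- `P = sqrt (T/(2 pi))`. -/
def PP (T : ℝ) : ℝ := Real.sqrt (T / (2 * π))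

/-- `theta1 t = (t/2) log (t/(2 pi)) - t/2 - pi/8`. -/
def theta1 (t : ℝ) : ℝ := t / 2 * Real.log (t / (2 * π)) - t / 2 - π / 8

/-- The short trigonometric sum over primes: `∑_{2 ≤ p ≤ ξ, p prime} p^{-1/2} cos (t log p)`. -/
def primeSum (ξ t : ℝ) : ℝ :=
  ∑ p ∈ (Finset.Icc 2 ⌊ξ⌋₊).filter Nat.Prime, (p : ℝ) ^ (-(1:ℝ)/2) * Real.cos (t * Real.log p)

/-- The short trigonometric sum `∑_{2 ≤ n ≤ ξ} n^{-1/2} cos (t log n)`. -/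
def natSum (ξ t : ℝ) : ℝ :=
  ∑ n ∈ Finset.Icc 2 ⌊ξ⌋₊, (n : ℝ) ^ (-(1:ℝ)/2) * Real.cos (t * Real.log n)

/-- The short trigonometric sum `∑_{2 ≤ n ≤ ξ} d(n) n^{-1/2} cos (t log n)`,
where `d(n)` is the number of divisors of `n`. -/
def divSum (ξ t : ℝ) : ℝ :=
  ∑ n ∈ Finset.Icc 2 ⌊ξ⌋₊,
    (n.divisors.card : ℝ) * (n : ℝ) ^ (-(1:ℝ)/2) * Real.cos (t * Real.log n)

/-- `G₃(x; T, U) = ⋃_{ν : T ≤ g_{2ν} ≤ T+U} [g_{2ν}(-x), g_{2ν}(x)]`. -/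
def G3 (g : ℕ → ℝ → ℝ) (ε x T : ℝ) : Set ℝ :=
  ⋃ ν ∈ {ν : ℕ | T ≤ g (2 * ν) 0 ∧ g (2 * ν) 0 ≤ T + UU ε T},
    Set.Icc (g (2 * ν) (-x)) (g (2 * ν) x)

/-- `G₄(y; T, U) = ⋃_{ν : T ≤ g_{2ν+1} ≤ T+U} [g_{2ν+1}(-y), g_{2ν+1}(y)]`. -/
def G4 (g : ℕ → ℝ → ℝ) (ε y T : ℝ) : Set ℝ :=
  ⋃ ν ∈ {ν : ℕ | T ≤ g (2 * ν + 1) 0 ∧ g (2 * ν + 1) 0 ≤ T + UU ε T},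
    Set.Icc (g (2 * ν + 1) (-y)) (g (2 * ν + 1) y)

open Set Topology

/-!
Every interval `[g_m(-x), g_m(x)]` of `G₃ ∪ G₄` contains a point `g_m ≥ T`, and its length is at
most the total measure `∼ U = o(T)`, so `G₃ ∪ G₄` eventually lies where `φ₁` is increasing,
continuous and onto; hence `G₃ ∪ G₄ = φ₁([a, b])` for the interval `[a, b] = G̊₃ ∪ G̊₄`.
The weight `Z̃² = φ₁'` is nonnegative there and integrates over `[a, b]` to
`φ₁ b - φ₁ a = |G₃ ∪ G₄|`, so the first mean value theorem for integrals writes the integral in (i)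
as `S(φ₁ α) Z²(φ₁ α) |G₃ ∪ G₄|` for some `α ∈ [a, b]`, `S` being the trigonometric sum.
Dividing (i) by (iii) gives `S(φ₁ α) Z²(φ₁ α) ∼ (2ε/5 - ε²/50)(log P)²`, and one takes
`α₃ = α₄ = α`.
-/

theorem IsCompact.exists_setIntegral_mul_eq_mul_setIntegral {X : Type*} [TopologicalSpace X]
    [T2Space X] [MeasurableSpace X] [OpensMeasurableSpace X] {μ : Measure X} {s : Set X}
    (hs : IsCompact s) (hs' : IsPreconnected s) (hne : s.Nonempty) {f w : X → ℝ}
    (hf : ContinuousOn f s) (hw : IntegrableOn w s μ) (hw0 : ∀ x ∈ s, 0 ≤ w x) :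
    ∃ c ∈ s, ∫ x in s, f x * w x ∂μ = f c * ∫ x in s, w x ∂μ := by
  obtain ⟨x₀, hx₀, hmin⟩ := hs.exists_isMinOn hne hf
  obtain ⟨x₁, hx₁, hmax⟩ := hs.exists_isMaxOn hne hf
  have hfw : IntegrableOn (fun x => f x * w x) s μ := hw.continuousOn_mul hf hs
  have hlow : f x₀ * ∫ x in s, w x ∂μ ≤ ∫ x in s, f x * w x ∂μ := by
    rw [← integral_const_mul]
    exact setIntegral_mono_on (hw.const_mul _) hfw hs.measurableSet
      fun x hx => mul_le_mul_of_nonneg_right (hmin hx) (hw0 x hx)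
  have hupp : ∫ x in s, f x * w x ∂μ ≤ f x₁ * ∫ x in s, w x ∂μ := by
    rw [← integral_const_mul]
    exact setIntegral_mono_on hfw (hw.const_mul _) hs.measurableSet
      fun x hx => mul_le_mul_of_nonneg_right (hmax hx) (hw0 x hx)
  rcases (setIntegral_nonneg (μ := μ) hs.measurableSet hw0).eq_or_lt with hW | hW
  · rw [← hW, mul_zero] at hlow hupp
    exact ⟨x₀, hx₀, by rw [← hW, mul_zero]; exact le_antisymm hupp hlow⟩
  · obtain ⟨c, hc, hfc⟩ := hs'.intermediate_value hx₀ hx₁ hf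
      ⟨(le_div_iff₀ hW).2 hlow, (div_le_iff₀ hW).2 hupp⟩
    exact ⟨c, hc, by rw [hfc, div_mul_cancel₀ _ hW.ne']⟩

theorem MonotoneOn.exists_setIntegral_mul_deriv_eq {φ φ' f : ℝ → ℝ} {a b : ℝ} (hab : a ≤ b)
    (hφ : MonotoneOn φ (Icc a b)) (hφ' : ∀ t ∈ Icc a b, HasDerivAt φ (φ' t) t)
    (hf : ContinuousOn f (Icc a b)) :
    ∃ c ∈ Icc a b, ∫ t in Icc a b, f t * φ' t = f c * (φ b - φ a) := by
  rcases hab.eq_or_lt with rfl | hlt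
  · exact ⟨a, left_mem_Icc.2 le_rfl, by simp⟩
  have hnonneg : ∀ t ∈ Icc a b, 0 ≤ φ' t := fun t ht =>
    (hφ' t ht).hasDerivWithinAt.nonneg_of_monotoneOn (uniqueDiffOn_Icc hlt t ht).accPt hφ
  have hint : IntervalIntegrable φ' volume a b :=
    intervalIntegral.intervalIntegrable_deriv_of_nonneg
      (fun t ht => (hφ' t (uIcc_of_le hab ▸ ht)).continuousAt.continuousWithinAt)
      (fun t ht => hφ' t (Ioo_subset_Icc_self (by simpa [hab] using ht)))
      (fun t ht => hnonneg t (Ioo_subset_Icc_self (by simpa [hab] using ht)))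
  have hftc : ∫ t in Icc a b, φ' t = φ b - φ a := by
    rw [integral_Icc_eq_integral_Ioc, ← intervalIntegral.integral_of_le hab]
    exact intervalIntegral.integral_eq_sub_of_hasDerivAt
      (fun t ht => hφ' t (uIcc_of_le hab ▸ ht)) hint
  rw [← hftc]
  exact isCompact_Icc.exists_setIntegral_mul_eq_mul_setIntegral isPreconnected_Icc
    (nonempty_Icc.2 hab) hf ((intervalIntegrable_iff_integrableOn_Icc_of_le hab).1 hint) hnonneg

theorem MonotoneOn.exists_setIntegral_mul_deriv_eq_mul_volumeReal {φ φ' f : ℝ → ℝ}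
    {T₀ K a b : ℝ} {G : Set ℝ} (hφ : MonotoneOn φ (Ioi T₀))
    (hφ' : ∀ t ∈ Ioi T₀, HasDerivAt φ (φ' t) t) (hφtop : Tendsto φ atTop atTop) (hK : T₀ < K)
    (hG : G ⊆ Ioi (φ K)) (hGne : G.Nonempty) (hpre : φ ⁻¹' G = Icc a b)
    (hf : ContinuousOn f (Icc a b)) :
    ∃ c ∈ Icc a b, ∫ t in Icc a b, f t * φ' t = f c * volume.real G := by
  have hcont : ContinuousOn φ (Ioi T₀) := fun t ht => (hφ' t ht).continuousAt.continuousWithinAt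
  have hrange : G ⊆ φ '' Ici K := hG.trans <| Ioi_subset_Ici_self.trans <|
    intermediate_value_Ici (hcont.mono fun t ht => hK.trans_le ht) hφtop
  obtain ⟨_, hy⟩ := hGne
  obtain ⟨s, hKs, rfl⟩ := hrange hy
  have hs : s ∈ Icc a b := hpre ▸ hy
  have hab : a ≤ b := hs.1.trans hs.2
  -- `φ K ∉ G`, so `K ∉ φ ⁻¹' G = [a, b]`, while `K ≤ s ≤ b`.
  have hKa : K < a := by
    by_contra! haK
    have hK_mem : K ∈ φ ⁻¹' G := hpre ▸ ⟨haK, hKs.trans hs.2⟩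
    exact lt_irrefl _ (mem_Ioi.1 (hG hK_mem))
  have hsub : Icc a b ⊆ Ioi T₀ := fun t ht => hK.trans (hKa.trans_le ht.1)
  have hGeq : G = Icc (φ a) (φ b) := by
    rw [← image_preimage_eq_of_subset (hrange.trans (image_subset_range _ _)), hpre]
    exact (hcont.mono hsub).image_Icc_of_monotoneOn hab (hφ.mono hsub)
  rw [hGeq, Real.volume_real_Icc_of_le ((hφ.mono hsub) (left_mem_Icc.2 hab)
    (right_mem_Icc.2 hab) hab)]
  exact (hφ.mono hsub).exists_setIntegral_mul_deriv_eq hab (fun t ht => hφ' t (hsub ht)) hf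

theorem MonotoneOn.exists_isEquivalent_of_setIntegral_preimage_isEquivalent {ι : Type*}
    {l : Filter ι} [l.NeBot] {φ φ' : ℝ → ℝ} {T₀ : ℝ} {G : ι → Set ℝ} {F : ι → ℝ → ℝ}
    {w m : ι → ℝ} (hφ : MonotoneOn φ (Ioi T₀)) (hφ' : ∀ t ∈ Ioi T₀, HasDerivAt φ (φ' t) t)
    (hφtop : Tendsto φ atTop atTop) (hfar : ∀ c, ∀ᶠ i in l, G i ⊆ Ioi c)
    (hIcc : ∀ᶠ i in l, ∃ a b : ℝ, φ ⁻¹' G i = Icc a b ∧ ContinuousOn (F i) (Icc a b))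
    (hint : (fun i => ∫ t in φ ⁻¹' G i, F i t * φ' t) ~[l] w)
    (hvol : (fun i => volume.real (G i)) ~[l] m) (hm : ∀ᶠ i in l, 0 < m i) :
    ∃ α : ι → ℝ, (∀ᶠ i in l, α i ∈ φ ⁻¹' G i) ∧ (fun i => F i (α i)) ~[l] fun i => w i / m i := by
  have hvol_pos := hvol.eventually_pos hm
  have hmean : ∀ᶠ i in l, ∃ α ∈ φ ⁻¹' G i,
      ∫ t in φ ⁻¹' G i, F i t * φ' t = F i α * volume.real (G i) := by
    filter_upwards [hIcc, hvol_pos, hfar (φ (T₀ + 1))] with i ⟨a, b, hpre, hF⟩ hvol_i hfar_i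
    rw [hpre]
    exact hφ.exists_setIntegral_mul_deriv_eq_mul_volumeReal hφ' hφtop (lt_add_one T₀) hfar_i
      (nonempty_of_measure_ne_zero (ENNReal.toReal_pos_iff.1 hvol_i).1.ne') hpre hF
  obtain ⟨α, hα⟩ := hmean.choice
  refine ⟨α, hα.mono fun i hi => hi.1, (hint.div hvol).congr_left ?_⟩
  filter_upwards [hα, hvol_pos] with i hi hvol_i
  exact (eq_div_of_mul_eq hvol_i.ne' hi.2.symm).symm

theorem Asymptotics.IsEquivalent.div_of_mul {α 𝕜 : Type*} [NormedField 𝕜] {l : Filter α}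
    {u w v : α → 𝕜} (h : (fun x => u x * w x) ~[l] v) (hv : ∀ᶠ x in l, v x ≠ 0) :
    u ~[l] fun x => v x / w x := by
  have hw : ∀ᶠ x in l, w x ≠ 0 := by
    filter_upwards [h.isBigO_symm.eq_zero_imp, hv] with x hx hvx hwx
    exact hvx (hx (by simp [hwx]))
  refine (h.div (IsEquivalent.refl (u := w))).congr_left ?_
  filter_upwards [hw] with x hx using mul_div_cancel_right₀ _ hx

theorem exists_Icc_subset_G3_union_G4 {g : ℕ → ℝ → ℝ} {ε x T y : ℝ}
    (hy : y ∈ G3 g ε x T ∪ G4 g ε x T) :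
    ∃ m, T ≤ g m 0 ∧ y ∈ Icc (g m (-x)) (g m x) ∧
      Icc (g m (-x)) (g m x) ⊆ G3 g ε x T ∪ G4 g ε x T := by
  rcases hy with hy | hy
  · obtain ⟨ν, hν, hyν⟩ := mem_iUnion₂.1 hy
    exact ⟨2 * ν, hν.1, hyν, fun z hz => Or.inl (mem_biUnion hν hz)⟩
  · obtain ⟨ν, hν, hyν⟩ := mem_iUnion₂.1 hy
    exact ⟨2 * ν + 1, hν.1, hyν, fun z hz => Or.inr (mem_biUnion hν hz)⟩

theorem sub_le_volumeReal_G3_union_G4 {g : ℕ → ℝ → ℝ} (hg : ∀ m, MonotoneOn (g m) (Icc (-π) π))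
    {ε x T y : ℝ} (hx : x ∈ Icc 0 π) (hfin : volume (G3 g ε x T ∪ G4 g ε x T) ≠ ⊤)
    (hy : y ∈ G3 g ε x T ∪ G4 g ε x T) :
    T - y ≤ volume.real (G3 g ε x T ∪ G4 g ε x T) := by
  obtain ⟨m, hTm, hym, hsub⟩ := exists_Icc_subset_G3_union_G4 hy
  have hmid : g m 0 ≤ g m x :=
    hg m ⟨by linarith [pi_pos], pi_pos.le⟩ ⟨by linarith [hx.1, pi_pos], hx.2⟩ hx.1
  calc T - y ≤ g m x - g m (-x) := by linarith [hym.1]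
    _ = volume.real (Icc (g m (-x)) (g m x)) :=
      (Real.volume_real_Icc_of_le (hym.1.trans hym.2)).symm
    _ ≤ _ := measureReal_mono hsub hfin

theorem eventually_UU_pos (ε : ℝ) : ∀ᶠ T in atTop, 0 < UU ε T := by
  filter_upwards [eventually_gt_atTop 0] with T hT using rpow_pos_of_pos hT _

theorem tendsto_UU_div_atTop {ε : ℝ} (hε : ε < 1 / 2) :
    Tendsto (fun T => UU ε T / T) atTop (𝓝 0) := by
  refine (tendsto_rpow_neg_atTop (y := 1 / 2 - ε) (by linarith)).congr' ?_
  filter_upwards [eventually_gt_atTop 0] with T hT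
  rw [UU, ← rpow_sub_one hT.ne']
  ring_nf

theorem eventually_log_PP_pos : ∀ᶠ T in atTop, 0 < Real.log (PP T) := by
  filter_upwards [eventually_gt_atTop (2 * π)] with T hT
  refine Real.log_pos ((Real.lt_sqrt zero_le_one).2 ?_)
  rw [one_pow, one_lt_div (by positivity)]
  exact hT

theorem eventually_G3_union_G4_subset_Ioi {g : ℕ → ℝ → ℝ}
    (hg : ∀ m, MonotoneOn (g m) (Icc (-π) π)) {ε x : ℝ} (hx : x ∈ Icc 0 π) (hε : ε < 1 / 2)
    (h3 : (fun T => volume.real (G3 g ε x T ∪ G4 g ε x T)) ~[atTop] UU ε) (c : ℝ) :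
    ∀ᶠ T in atTop, G3 g ε x T ∪ G4 g ε x T ⊆ Ioi c := by
  filter_upwards [eventually_UU_pos ε, h3.eventually_pos (eventually_UU_pos ε),
    h3.isLittleO.bound one_pos,
    (tendsto_order.1 (tendsto_UU_div_atTop hε)).2 (1 / 4) (by norm_num),
    eventually_gt_atTop (max (2 * c) 0)] with T hUpos hvol hdiff hU hT y hy
  have hT0 : 0 < T := (le_max_right _ _).trans_lt hT
  have hvolU : volume.real (G3 g ε x T ∪ G4 g ε x T) ≤ 2 * UU ε T := by
    rw [Pi.sub_apply, norm_eq_abs, norm_eq_abs, abs_of_pos hUpos, abs_le] at hdiff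
    linarith
  have hUT : UU ε T < T / 4 := by rw [div_lt_iff₀ hT0] at hU; linarith
  have := sub_le_volumeReal_G3_union_G4 hg hx (ENNReal.toReal_pos_iff.1 hvol).2.ne hy
  show c < y
  by_contra! hyc
  linarith [le_max_left (2 * c) 0]

theorem stmt_7_general
    (T₀ : ℝ) (φ₁ Zt : ℝ → ℝ)
    (hφmono : StrictMonoOn φ₁ (Set.Ioi T₀))
    (hφderiv : ∀ t ∈ Set.Ioi T₀, HasDerivAt φ₁ (Zt t) t)
    (hφunb : Tendsto φ₁ atTop atTop)
    (g : ℕ → ℝ → ℝ)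
    (hgmono : ∀ ν : ℕ, StrictMonoOn (g ν) (Set.Icc (-π) π))
    (ε : ℝ) (hε0 : 0 < ε) (hε1 : ε ≤ 1/10)
    (h1 : (fun T => ∫ t in φ₁ ⁻¹' G3 g ε (π / 2) T ∪ φ₁ ⁻¹' G4 g ε (π / 2) T,
        natSum (XI ε T) (φ₁ t) * Zsq (φ₁ t) * Zt t) ~[atTop]
      (fun T => (2 * ε / 5 - ε ^ 2 / 50) * UU ε T * Real.log (PP T) ^ 2))
    (h2 : ∀ᶠ T in atTop, ∃ a b : ℝ,
      φ₁ ⁻¹' G3 g ε (π / 2) T ∪ φ₁ ⁻¹' G4 g ε (π / 2) T = Set.Icc a b ∧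
      ContinuousOn (fun t => natSum (XI ε T) (φ₁ t)) (Set.Icc a b) ∧
      ContinuousOn (fun t => Zsq (φ₁ t)) (Set.Icc a b))
    (h3 : (fun T => (volume (G3 g ε (π / 2) T ∪ G4 g ε (π / 2) T)).toReal) ~[atTop]
      (fun T => UU ε T)) :
    ∃ α₁ α₂ : ℝ → ℝ,
      (∀ᶠ T in atTop,
        α₁ T ∈ φ₁ ⁻¹' G3 g ε (π / 2) T ∪ φ₁ ⁻¹' G4 g ε (π / 2) T ∧
        α₂ T ∈ φ₁ ⁻¹' G3 g ε (π / 2) T ∪ φ₁ ⁻¹' G4 g ε (π / 2) T) ∧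
      (fun T => natSum (XI ε T) (φ₁ (α₁ T))) ~[atTop]
        (fun T => (2 * ε / 5 - ε ^ 2 / 50) * Real.log (PP T) ^ 2 /
          ‖riemannZeta (1/2 + φ₁ (α₂ T) * Complex.I)‖ ^ 2) := by
  obtain ⟨α, hα_mem, hα⟩ :=
    hφmono.monotoneOn.exists_isEquivalent_of_setIntegral_preimage_isEquivalent
      (G := fun T => G3 g ε (π / 2) T ∪ G4 g ε (π / 2) T)
      (F := fun T t => natSum (XI ε T) (φ₁ t) * Zsq (φ₁ t)) hφderiv hφunb
      (eventually_G3_union_G4_subset_Ioi (fun m => (hgmono m).monotoneOn)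
        ⟨by positivity, by linarith [pi_pos]⟩ (by linarith) h3)
      (h2.mono fun T ⟨a, b, hpre, hcont, hcont'⟩ => ⟨a, b, hpre, hcont.mul hcont'⟩)
      h1 h3 (eventually_UU_pos ε)
  refine ⟨α, α, hα_mem.mono fun T hT => ⟨hT, hT⟩, ?_⟩
  refine (hα.congr_right ?_).div_of_mul ?_
  · filter_upwards [eventually_UU_pos ε] with T hU
    field_simp
  · filter_upwards [eventually_log_PP_pos] with T hT
    have : 0 < 2 * ε / 5 - ε ^ 2 / 50 := by nlinarith
    positivity

theorem stmt_7
    (T₀ : ℝ) (φ₁ Zt : ℝ → ℝ)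
    (hφmono : StrictMonoOn φ₁ (Set.Ioi T₀))
    (hφderiv : ∀ t ∈ Set.Ioi T₀, HasDerivAt φ₁ (Zt t) t)
    (hφC1 : ContinuousOn Zt (Set.Ioi T₀))
    (hφunb : Tendsto φ₁ atTop atTop)
    (hZt : ∃ E : ℝ → ℝ, E =O[atTop] (fun t => Real.log (Real.log t) / Real.log t) ∧
      ∀ᶠ t in atTop, Zt t * ((1 + E t) * Real.log t) = Zsq t)
    (g : ℕ → ℝ → ℝ)
    (hgθ : ∀ ν : ℕ, ∀ τ ∈ Set.Icc (-π) π, theta1 (g ν τ) = π / 2 * ν + τ / 2)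
    (hgmono : ∀ ν : ℕ, StrictMonoOn (g ν) (Set.Icc (-π) π))
    (ε : ℝ) (hε0 : 0 < ε) (hε1 : ε ≤ 1/10)
    (h1 : (fun T => ∫ t in φ₁ ⁻¹' G3 g ε (π / 2) T ∪ φ₁ ⁻¹' G4 g ε (π / 2) T,
        natSum (XI ε T) (φ₁ t) * Zsq (φ₁ t) * Zt t) ~[atTop]
      (fun T => (2 * ε / 5 - ε ^ 2 / 50) * UU ε T * Real.log (PP T) ^ 2))
    (h2 : ∀ᶠ T in atTop, ∃ a b : ℝ,
      φ₁ ⁻¹' G3 g ε (π / 2) T ∪ φ₁ ⁻¹' G4 g ε (π / 2) T = Set.Icc a b ∧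
      ContinuousOn (fun t => natSum (XI ε T) (φ₁ t)) (Set.Icc a b) ∧
      ContinuousOn (fun t => Zsq (φ₁ t)) (Set.Icc a b))
    (h3 : (fun T => (volume (G3 g ε (π / 2) T ∪ G4 g ε (π / 2) T)).toReal) ~[atTop]
      (fun T => UU ε T)) :
    ∃ α₁ α₂ : ℝ → ℝ,
      (∀ᶠ T in atTop,
        α₁ T ∈ φ₁ ⁻¹' G3 g ε (π / 2) T ∪ φ₁ ⁻¹' G4 g ε (π / 2) T ∧
        α₂ T ∈ φ₁ ⁻¹' G3 g ε (π / 2) T ∪ φ₁ ⁻¹' G4 g ε (π / 2) T) ∧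
      (fun T => natSum (XI ε T) (φ₁ (α₁ T))) ~[atTop]
        (fun T => (2 * ε / 5 - ε ^ 2 / 50) * Real.log (PP T) ^ 2 /
          ‖riemannZeta (1/2 + φ₁ (α₂ T) * Complex.I)‖ ^ 2) :=
  stmt_7_general T₀ φ₁ Zt hφmono hφderiv hφunb g hgmono ε hε0 hε1 h1 h2 h3
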